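/- There exists L₀ = L₀(β, ψ) such that for all L ≥ L₀ and every connected interval I ⊆ B = B(−1/2−β), one has ∫_I log|f'(z)| dz ≥ |I| · log( L^{1−β} |I| ). -/

import Mathlib

open MeasureTheory Set Filter Topology

noncomputable section

/-! ## Basic circle setup.
We parametrize `S¹ = ℝ/ℤ` by `[0,1)`.  Functions and subsets of `S¹` are represented by
1-periodic functions/subsets of `ℝ`. -/

/-- The circle distance on `ℝ/ℤ`, computed on representatives. -/
def dS1 (x y : ℝ) : ℝ := |x - y - (round (x - y) : ℝ)|

/-- Circle distance from a point to a set (a subset of `ℝ`, viewed 1-periodically). -/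
def dS1Set (x : ℝ) (A : Set ℝ) : ℝ := sInf (dS1 x '' A)

/-- The critical set `C'_ψ = {ψ' = 0}` as a subset of `ℝ`. -/
def Crit (ψ : ℝ → ℝ) : Set ℝ := {x : ℝ | deriv ψ x = 0}

/-- (H1): the critical set is finite (as a subset of `S¹ ≅ [0,1)`). -/
def H1 (ψ : ℝ → ℝ) : Prop := (Crit ψ ∩ Ico (0:ℝ) 1).Finite

/-- (H2): no degenerate critical points. -/
def H2 (ψ : ℝ → ℝ) : Prop := ∀ x ∈ Crit ψ, deriv (deriv ψ) x ≠ 0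

/-- (H4): `‖ψ'‖_{C⁰} ≤ 1/10` and `‖ψ''‖_{C⁰} ≤ 1/10`. -/
def H4 (ψ : ℝ → ℝ) : Prop :=
  (∀ x : ℝ, |deriv ψ x| ≤ 1 / 10) ∧ ∀ x : ℝ, |deriv (deriv ψ) x| ≤ 1 / 10

/-- Standing assumptions on `ψ`: 1-periodicity, `C²` smoothness, (H1), (H2). -/
def PsiReg (ψ : ℝ → ℝ) : Prop :=
  Function.Periodic ψ 1 ∧ ContDiff ℝ 2 ψ ∧ H1 ψ ∧ H2 ψ

/-- The constant `K₁ = K₁(ψ)` with `|ψ'(x)| ≥ K₁ d(x, C'_ψ)`. -/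
def K1hyp (ψ : ℝ → ℝ) (K₁ : ℝ) : Prop :=
  0 < K₁ ∧ ∀ x : ℝ, K₁ * dS1Set x (Crit ψ) ≤ |deriv ψ x|

/-- `‖ψ''‖_{C⁰}`. -/
def psiC2norm (ψ : ℝ → ℝ) : ℝ := ⨆ x : ℝ, |deriv (deriv ψ) x|

/-- The circle map `f = f_{L,a} = Lψ + a (mod 1)`, on representatives in `[0,1)`. -/
def cmap (ψ : ℝ → ℝ) (L a x : ℝ) : ℝ := Int.fract (L * ψ x + a)

/-- The random orbit `X_{n+1} = f_{ω_n}(X_n) = f(X_n + ω_n)` on `S¹ ≅ [0,1)`;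
`orbitW ψ L a ω x n = fⁿ_ω(x)`. -/
def orbitW (ψ : ℝ → ℝ) (L a : ℝ) (ω : ℕ → ℝ) (x : ℝ) : ℕ → ℝ
  | 0 => x
  | n + 1 => cmap ψ L a (orbitW ψ L a ω x n + ω n)

/-- Deterministic iterates `fⁿ(x)`. -/
def detIter (ψ : ℝ → ℝ) (L a x : ℝ) (n : ℕ) : ℝ := orbitW ψ L a (fun _ => 0) x n

/-- Condition `(H3)_{c,k}`: `d(fˡ(x̂), C'_ψ) ≥ c` for all `x̂ ∈ C'_ψ` and `1 ≤ l ≤ k`. -/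
def H3cond (ψ : ℝ → ℝ) (L a c : ℝ) (k : ℕ) : Prop :=
  ∀ x ∈ Crit ψ, ∀ l : ℕ, 1 ≤ l → l ≤ k → c ≤ dS1Set (detIter ψ L a x l) (Crit ψ)

/-- The lifted random orbit `X̃_{n+1} = f̃(X̃_n + ω_n) = Lψ(X̃_n + ω_n) + a` on `ℝ`;
`liftOrbit ψ L a ω x n = f̃ⁿ_ω(x)`. -/
def liftOrbit (ψ : ℝ → ℝ) (L a : ℝ) (ω : ℕ → ℝ) (x : ℝ) : ℕ → ℝ
  | 0 => x
  | n + 1 => L * ψ (liftOrbit ψ L a ω x n + ω n) + a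

/-- `|(fⁿ_ω)'(x)|`, computed by the chain rule (the mod-1 projection has derivative 1). -/
def derivAbs (ψ : ℝ → ℝ) (L a : ℝ) (ω : ℕ → ℝ) (x : ℝ) (n : ℕ) : ℝ :=
  ∏ i ∈ Finset.range n, |L * deriv ψ (orbitW ψ L a ω x i + ω i)|

/-- `log |(fⁿ_ω)'(x)|`. -/
def logDerivSum (ψ : ℝ → ℝ) (L a : ℝ) (ω : ℕ → ℝ) (x : ℝ) (n : ℕ) : ℝ :=
  ∑ i ∈ Finset.range n, Real.log |L * deriv ψ (orbitW ψ L a ω x i + ω i)|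

/-- `log |(f̃ⁿ_ω)'(x)|` along the lifted orbit. -/
def logDerivSumLift (ψ : ℝ → ℝ) (L a : ℝ) (ω : ℕ → ℝ) (x : ℝ) (n : ℕ) : ℝ :=
  ∑ i ∈ Finset.range n, Real.log |L * deriv ψ (liftOrbit ψ L a ω x i + ω i)|

/-- The (signed) derivative `(f̃ⁿ_ω)'(x)` of the lifted composition. -/
def derivLift (ψ : ℝ → ℝ) (L a : ℝ) (ω : ℕ → ℝ) (x : ℝ) (n : ℕ) : ℝ :=
  ∏ i ∈ Finset.range n, (L * deriv ψ (liftOrbit ψ L a ω x i + ω i))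

/-- The uniform distribution `ν^ε` on `[-ε, ε]`. -/
def unif (ε : ℝ) : Measure ℝ :=
  ENNReal.ofReal (1 / (2 * ε)) • volume.restrict (Icc (-ε) ε)

/-- `P = ν^{⊗ ℕ}`: the coordinates of `ω` are i.i.d. with law `ν` under `P`. -/
def IsProductOf (P : Measure (ℕ → ℝ)) (ν : Measure ℝ) : Prop :=
  IsProbabilityMeasure P ∧
    ∀ (s : Finset ℕ) (A : ℕ → Set ℝ), (∀ i, MeasurableSet (A i)) →
      P {ω : ℕ → ℝ | ∀ i ∈ s, ω i ∈ A i} = ∏ i ∈ s, ν (A i)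

/-- A stationary probability measure for the Markov chain `X_{n+1} = f(X_n + ω_n)` on
`S¹ ≅ [0,1)`. -/
def IsStationaryS1 (ψ : ℝ → ℝ) (L a ε : ℝ) (μ : Measure ℝ) : Prop :=
  IsProbabilityMeasure μ ∧ μ (Ico (0:ℝ) 1) = 1 ∧
    ∀ A : Set ℝ, MeasurableSet A →
      μ A = ∫⁻ x, unif ε {w : ℝ | cmap ψ L a (x + w) ∈ A} ∂μ

/-- `μ` is supported on all of `S¹`. -/
def FullSupport (μ : Measure ℝ) : Prop :=
  ∀ U : Set ℝ, IsOpen U → (U ∩ Ico (0:ℝ) 1).Nonempty → 0 < μ U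

/-- The neighborhood `B(η) = {x : d(x, C'_ψ) ≤ K₁⁻¹ L^η}` of the critical set. -/
def Bset (ψ : ℝ → ℝ) (K₁ L η : ℝ) : Set ℝ := {x : ℝ | dS1Set x (Crit ψ) ≤ K₁⁻¹ * L ^ η}

/-- `G = S¹ ∖ B(-β)`. -/
def Gset (ψ : ℝ → ℝ) (K₁ L β : ℝ) : Set ℝ := (Bset ψ K₁ L (-β))ᶜ

/-- `B^l` for `0 ≤ l ≤ k` (`B⁰ = I`). -/
def BlSet (ψ : ℝ → ℝ) (K₁ L β : ℝ) (k l : ℕ) : Set ℝ :=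
  if l = k then Bset ψ K₁ L (-(k : ℝ) / 2 - β)
  else Bset ψ K₁ L (-(l : ℝ) / 2 - β) \ Bset ψ K₁ L (-((l : ℝ) + 1) / 2 - β)

/-- The shifted set `A_w = A - w`. -/
def shiftSet (A : Set ℝ) (w : ℝ) : Set ℝ := {x : ℝ | x + w ∈ A}
/-! ## The partition `R` into connected components of `G, B⁰, …, B^k`. -/

open scoped Classical in
/-- The element of `{G, B⁰, …, B^k}` containing `x`. -/
def pieceOf (ψ : ℝ → ℝ) (K₁ L β : ℝ) (k : ℕ) (x : ℝ) : Set ℝ :=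
  if x ∈ Gset ψ K₁ L β then Gset ψ K₁ L β
  else if h : ∃ l : ℕ, l ≤ k ∧ x ∈ BlSet ψ K₁ L β k l then BlSet ψ K₁ L β k h.choose
  else ∅

/-- The atom of the partition `R` containing `x`: the connected component of the piece of
`{G, B⁰, …, B^k}` containing `x`. -/
def atomR (ψ : ℝ → ℝ) (K₁ L β : ℝ) (k : ℕ) (x : ℝ) : Set ℝ :=
  connectedComponentIn (pieceOf ψ K₁ L β k x) x

/-- Length of a subset of `ℝ`. -/
def sLen (S : Set ℝ) : ℝ := (volume S).toReal

/-- The atom of the shifted partition `R_w` containing `z`. -/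
def atomRshift (ψ : ℝ → ℝ) (K₁ L β : ℝ) (k : ℕ) (w z : ℝ) : Set ℝ :=
  {t : ℝ | t + w ∈ atomR ψ K₁ L β k (z + w)}

/-- `J` is a longest atom of `R_w` restricted to `Jbar`. -/
def IsLongestAtom (ψ : ℝ → ℝ) (K₁ L β : ℝ) (k : ℕ) (w : ℝ) (Jbar J : Set ℝ) : Prop :=
  (∃ z ∈ Jbar, J = atomRshift ψ K₁ L β k w z ∩ Jbar) ∧
    ∀ z ∈ Jbar, sLen (atomRshift ψ K₁ L β k w z ∩ Jbar) ≤ sLen J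

/-- The random interval process `(J_i, J̄_i)` of Section 3.2:
`J₀ = X₀ + [-ε,ε]`, `J̄₁ = f̃(J₀)`, and for `i ≥ 1`, `J_i` is a longest atom of `R_{ω_i}|_{J̄_i}`
and `J̄_{i+1} = f̃_{ω_i}(J_i)`. -/
def IntervalProc (ψ : ℝ → ℝ) (L a K₁ β ε : ℝ) (k : ℕ) (X₀ : ℝ) (ω : ℕ → ℝ)
    (J Jbar : ℕ → Set ℝ) : Prop :=
  J 0 = Icc (X₀ - ε) (X₀ + ε) ∧
    Jbar 1 = (fun x : ℝ => L * ψ x + a) '' J 0 ∧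
    ∀ i : ℕ, 1 ≤ i →
      IsLongestAtom ψ K₁ L β k (ω i) (Jbar i) (J i) ∧
        Jbar (i + 1) = (fun x : ℝ => L * ψ (x + ω i) + a) '' J i

/-! ## The partition `𝒫` of Section 4.1 and the merged partitions `𝒫_ω(I)`. -/

/-- A partition `𝒫` of `S¹` (regarded 1-periodically on `ℝ`) as in Section 4.1(A):
atoms are intervals subordinate to `{G, B⁰, …, B^k}`; on `G` and `B^k` the atoms are the
connected components, and each component of `B^l` (`l < k`) is divided into intervals of
length in `[(l+1)⁻² L^{-(l+3)/2-β}, 2(l+1)⁻² L^{-(l+3)/2-β}]`. -/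
structure GoodPartition (ψ : ℝ → ℝ) (K₁ L β : ℝ) (k : ℕ) (PP : Set (Set ℝ)) : Prop where
  nonempty : ∀ C ∈ PP, C.Nonempty
  interval : ∀ C ∈ PP, C.OrdConnected
  disj : PP.PairwiseDisjoint id
  cover : ⋃₀ PP = univ
  periodic : ∀ C ∈ PP, (fun x : ℝ => x + 1) '' C ∈ PP
  subordinate : ∀ C ∈ PP, C ⊆ Gset ψ K₁ L β ∨ ∃ l ≤ k, C ⊆ BlSet ψ K₁ L β k l
  g_atoms : ∀ C ∈ PP, C ⊆ Gset ψ K₁ L β → ∀ x ∈ C,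
    C = connectedComponentIn (Gset ψ K₁ L β) x
  bk_atoms : ∀ C ∈ PP, C ⊆ BlSet ψ K₁ L β k k → ∀ x ∈ C,
    C = connectedComponentIn (BlSet ψ K₁ L β k k) x
  bl_len : ∀ C ∈ PP, ∀ l : ℕ, l < k → C ⊆ BlSet ψ K₁ L β k l →
    (((l : ℝ) + 1) ^ 2)⁻¹ * L ^ (-((l : ℝ) + 3) / 2 - β) ≤ sLen C ∧
      sLen C ≤ 2 * (((l : ℝ) + 1) ^ 2)⁻¹ * L ^ (-((l : ℝ) + 3) / 2 - β)

/-- The non-singleton atoms of the shifted partition `𝒫_w` restricted to `I`. -/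
def restAtoms (PP : Set (Set ℝ)) (w : ℝ) (I : Set ℝ) : Set (Set ℝ) :=
  {A : Set ℝ | (∃ C ∈ PP, A = ((fun x : ℝ => x - w) '' C) ∩ I) ∧ A.Nontrivial}

/-- `A` lies (weakly) to the left of `B`. -/
def setBefore (A B : Set ℝ) : Prop := ∀ a ∈ A, ∀ b ∈ B, a ≤ b

/-- `A` is one of the two leftmost members of `𝒜`. -/
def TwoLeft (𝒜 : Set (Set ℝ)) (A : Set ℝ) : Prop :=
  A ∈ 𝒜 ∧ {B ∈ 𝒜 | B ≠ A ∧ setBefore B A}.Subsingleton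

/-- `A` is one of the two rightmost members of `𝒜`. -/
def TwoRight (𝒜 : Set (Set ℝ)) (A : Set ℝ) : Prop :=
  A ∈ 𝒜 ∧ {B ∈ 𝒜 | B ≠ A ∧ setBefore A B}.Subsingleton

/-- `𝒜` has at least four members. -/
def AtLeastFour (𝒜 : Set (Set ℝ)) : Prop :=
  ∃ s : Finset (Set ℝ), ↑s ⊆ 𝒜 ∧ s.card = 4

/-- `S` is an atom of the merged partition `𝒫_w(I)` (whose atoms `𝒜 = restAtoms PP w I`
are merged at the two ends, and which is trivial if `N ≤ 3`). -/
def MergedAtom (𝒜 : Set (Set ℝ)) (I S : Set ℝ) : Prop :=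
  (¬ AtLeastFour 𝒜 ∧ S = I) ∨
    (AtLeastFour 𝒜 ∧
      ((∃ A B : Set ℝ, A ∈ 𝒜 ∧ B ∈ 𝒜 ∧ A ≠ B ∧ TwoLeft 𝒜 A ∧ TwoLeft 𝒜 B ∧ S = A ∪ B) ∨
        (∃ A B : Set ℝ, A ∈ 𝒜 ∧ B ∈ 𝒜 ∧ A ≠ B ∧ TwoRight 𝒜 A ∧ TwoRight 𝒜 B ∧ S = A ∪ B) ∨
        (S ∈ 𝒜 ∧ ¬ TwoLeft 𝒜 S ∧ ¬ TwoRight 𝒜 S)))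

/-! ## Itineraries (Section 4.1(B),(C)). -/

/-- The image `f̃ʲ_ω(A)`. -/
def Fim (ψ : ℝ → ℝ) (L a : ℝ) (ω : ℕ → ℝ) (j : ℕ) (A : Set ℝ) : Set ℝ :=
  (fun x : ℝ => liftOrbit ψ L a ω x j) '' A

/-- `C 0 ⊇ C 1 ⊇ ⋯ ⊇ C n` is a chain of itinerary atoms: `C i ∈ 𝒬_i` for `i ≤ n`. -/
def AtomChain (ψ : ℝ → ℝ) (L a : ℝ) (PP : Set (Set ℝ)) (ω : ℕ → ℝ) (I : Set ℝ)
    (n : ℕ) (C : ℕ → Set ℝ) : Prop :=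
  MergedAtom (restAtoms PP (ω 0) I) I (C 0) ∧
    ∀ i : ℕ, i < n →
      ∃ S : Set ℝ,
        MergedAtom (restAtoms PP (ω (i + 1)) (Fim ψ L a ω (i + 1) (C i)))
            (Fim ψ L a ω (i + 1) (C i)) S ∧
          C (i + 1) = C i ∩ (fun x : ℝ => liftOrbit ψ L a ω x (i + 1)) ⁻¹' S

/-- `τ ≥ n` on the chain `C`: no near-visit to `B^k` before time `n`. -/
def ChainTauGE (ψ : ℝ → ℝ) (K₁ L a β : ℝ) (k : ℕ) (ω : ℕ → ℝ) (C : ℕ → Set ℝ)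
    (n : ℕ) : Prop :=
  ∀ i : ℕ, i < n → Fim ψ L a ω i (C i) ∩ shiftSet (BlSet ψ K₁ L β k k) (ω i) = ∅

/-- The chain `C` is bound at time `t`: `t ∈ [t_j + 1, t_j + p_j]` for some bound period. -/
def ChainBoundAt (ψ : ℝ → ℝ) (K₁ L a β : ℝ) (k : ℕ) (ω : ℕ → ℝ) (C : ℕ → Set ℝ)
    (t : ℕ) : Prop :=
  ∃ s : ℕ, s < t ∧ ∃ l : ℕ, 1 ≤ l ∧ l ≤ k ∧
    (Fim ψ L a ω s (C s) ∩ shiftSet (BlSet ψ K₁ L β k l) (ω s)).Nonempty ∧ t ≤ s + l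

/-! ## The supporting interval process `(I_n)` of Section 5.1. -/

open scoped Classical in
/-- The shift used when mapping `I_n` forward: `0` if `I_n` is a fresh noise interval
(`n = 0` or `n - 1` was a near-visit to `B^k`), and `ω_n` otherwise. -/
def stepShift (ψ : ℝ → ℝ) (K₁ L β : ℝ) (k : ℕ) (ω : ℕ → ℝ) (I : ℕ → Set ℝ) : ℕ → ℝ
  | 0 => 0
  | n + 1 =>
    if (I n ∩ shiftSet (BlSet ψ K₁ L β k k) (ω n)).Nonempty then 0 else ω (n + 1)

/-- The supporting interval process `(I_n)` of Section 5.1: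
`I₀ = X̃₀ + [-ε,ε]`; if `I_n` meets `B^k_{ω_n}` then `I_{n+1} = X̃_{n+1} + [-ε,ε]`, and
otherwise `I_{n+1}` is the atom of `𝒫_{ω_{n+1}}(f̃_{(·)}(I_n))` containing `X̃_{n+1}`. -/
def SuppProc (ψ : ℝ → ℝ) (L a K₁ β ε : ℝ) (k : ℕ) (PP : Set (Set ℝ)) (X₀ : ℝ)
    (ω : ℕ → ℝ) (I : ℕ → Set ℝ) : Prop :=
  I 0 = Icc (X₀ - ε) (X₀ + ε) ∧
    ∀ n : ℕ,
      ((I n ∩ shiftSet (BlSet ψ K₁ L β k k) (ω n)).Nonempty →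
          I (n + 1) =
            Icc (liftOrbit ψ L a ω X₀ (n + 1) - ε) (liftOrbit ψ L a ω X₀ (n + 1) + ε)) ∧
      (¬ (I n ∩ shiftSet (BlSet ψ K₁ L β k k) (ω n)).Nonempty →
          MergedAtom
              (restAtoms PP (ω (n + 1))
                ((fun x : ℝ => L * ψ (x + stepShift ψ K₁ L β k ω I n) + a) '' I n))
              ((fun x : ℝ => L * ψ (x + stepShift ψ K₁ L β k ω I n) + a) '' I n)
              (I (n + 1)) ∧
            liftOrbit ψ L a ω X₀ (n + 1) ∈ I (n + 1))

/-- `τ_j = m` for the supporting interval process: `I_m` meets `B^k_{ω_m}`, `m ≥ 1`, and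
exactly `j - 1` earlier positive times do so. -/
def TauEq (ψ : ℝ → ℝ) (K₁ L β : ℝ) (k : ℕ) (ω : ℕ → ℝ) (I : ℕ → Set ℝ)
    (j m : ℕ) : Prop :=
  0 < m ∧ (I m ∩ shiftSet (BlSet ψ K₁ L β k k) (ω m)).Nonempty ∧
    ∃ s : Finset ℕ,
      (∀ i : ℕ, i ∈ s ↔
        (0 < i ∧ i < m ∧ (I i ∩ shiftSet (BlSet ψ K₁ L β k k) (ω i)).Nonempty)) ∧
      s.card = j - 1

/-! Critical points are uniformly separated, since there are finitely many per period. So once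
`L` is large, a connected `I ⊆ B` lies in a small ball around a single critical point `c`, and `c`
is the critical point nearest to each `z ∈ I`. This gives `|f'(z)| ≥ L K₁ |z - c|` on `I`, hence
`∫_I log |f'| ≥ |I| log (L K₁) + ∫_I log |z - c| dz`. Among intervals of length `h`, the integral of
`log |z - c|` is smallest on the one centred at `c`, where it is `h log (h / 2) - h`. The spare
factor `L ^ β` absorbs the constants as soon as `β log L ≥ 1 + log 2 - log K₁`. -/

open Real Metric

lemma Function.Periodic.deriv {𝕜 F : Type*} [NontriviallyNormedField 𝕜] [NormedAddCommGroup F]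
    [NormedSpace 𝕜 F] {f : 𝕜 → F} {c : 𝕜} (hf : Function.Periodic f c) :
    Function.Periodic (deriv f) c := fun x => by
  rw [← deriv_comp_add_const, hf.funext]

lemma Set.Finite.eventually_pairwise_lt_dist {X : Type*} [MetricSpace X] {s : Set X}
    (hs : s.Finite) : ∀ᶠ ε in 𝓝 (0 : ℝ), s.Pairwise fun a b => ε < dist a b := by
  refine (eventually_all_finite hs).2 fun a _ => (eventually_all_finite hs).2 fun b _ => ?_
  by_cases hab : a = b
  · exact Eventually.of_forall fun _ h => absurd hab h
  · exact (eventually_lt_nhds (dist_pos.2 hab)).mono fun _ h _ => h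

lemma eventually_pairwise_lt_dist_of_add_int_mem {A : Set ℝ}
    (hA : ∀ a ∈ A, ∀ n : ℤ, a + n ∈ A) (hfin : (A ∩ Ico 0 1).Finite) :
    ∀ᶠ ε in 𝓝 (0 : ℝ), A.Pairwise fun a b => ε < dist a b := by
  have hS : (A ∩ Icc (-1) 2).Finite := by
    refine (hfin.add ((finite_Icc (-1 : ℤ) 2).image ((↑) : ℤ → ℝ))).subset ?_
    rintro x ⟨hxA, hx₁, hx₂⟩
    refine ⟨x + ((-⌊x⌋ : ℤ) : ℝ), ⟨hA x hxA _, ?_, ?_⟩, ⌊x⌋, ⟨⌊x⌋, ⟨?_, ?_⟩, rfl⟩,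
      by push_cast; ring⟩
    · push_cast; linarith [Int.floor_le x]
    · push_cast; linarith [Int.lt_floor_add_one x]
    · exact Int.le_floor.2 (by exact_mod_cast hx₁)
    · exact_mod_cast (Int.floor_le x).trans hx₂
  filter_upwards [hS.eventually_pairwise_lt_dist, eventually_lt_nhds one_pos]
    with ε hε hε₁ a ha b hb hab
  rcases lt_or_ge (dist a b) 1 with hd | hd
  · -- translate `a` into `[0, 1)`; then `b` lands in `[-1, 2]`
    obtain ⟨hd₁, hd₂⟩ := abs_lt.1 (Real.dist_eq a b ▸ hd)
    set k : ℝ := ((-⌊a⌋ : ℤ) : ℝ) with hk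
    have hk₁ : 0 ≤ a + k := by rw [hk]; push_cast; linarith [Int.floor_le a]
    have hk₂ : a + k < 1 := by rw [hk]; push_cast; linarith [Int.lt_floor_add_one a]
    have key := hε (show a + k ∈ A ∩ Icc (-1) 2 from ⟨hA a ha _, by linarith, by linarith⟩)
      (show b + k ∈ A ∩ Icc (-1) 2 from ⟨hA b hb _, by linarith, by linarith⟩)
      (by simpa using hab)
    simpa only [dist_add_right] using key
  · linarith

lemma dS1_le_dist (x y : ℝ) : dS1 x y ≤ dist x y := by
  simpa [dS1, Real.dist_eq] using round_le (x - y) 0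

lemma dS1Set_eq_infDist {A : Set ℝ} (hA : ∀ a ∈ A, ∀ n : ℤ, a + n ∈ A) (hne : A.Nonempty)
    (x : ℝ) : dS1Set x A = infDist x A := by
  have hbdd : BddBelow (dS1 x '' A) := ⟨0, by rintro _ ⟨a, -, rfl⟩; exact abs_nonneg _⟩
  refine le_antisymm ((le_infDist hne).2 fun a ha => ?_) (le_csInf (hne.image _) ?_)
  · exact (csInf_le hbdd ⟨a, ha, rfl⟩).trans (dS1_le_dist x a)
  · rintro _ ⟨a, ha, rfl⟩
    calc infDist x A ≤ dist x (a + round (x - a)) := infDist_le_dist_of_mem (hA a ha _)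
      _ = dS1 x a := by rw [Real.dist_eq, dS1]; ring_nf

lemma IsPreconnected.exists_subset_ball_dist_le_infDist {X : Type*} [MetricSpace X]
    {A s : Set X} {r : ℝ} (hs : IsPreconnected s) (hsne : s.Nonempty) (hA : A.Nonempty)
    (hAsep : A.Pairwise fun a b => 2 * r ≤ dist a b) (hsA : ∀ z ∈ s, infDist z A < r) :
    ∃ c ∈ A, s ⊆ ball c r ∧ ∀ z ∈ s, dist z c ≤ infDist z A := by
  obtain ⟨z₀, hz₀⟩ := hsne
  obtain ⟨c, hc, hz₀c⟩ := (infDist_lt_iff hA).1 (hsA z₀ hz₀)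
  have hsc : s ⊆ ball c r := by
    refine hs.subset_left_of_subset_union (v := ⋃ a ∈ A \ {c}, ball a r) isOpen_ball
      (isOpen_biUnion fun _ _ => isOpen_ball) ?_ ?_ ⟨z₀, hz₀, hz₀c⟩
    · refine Set.disjoint_iUnion₂_right.2 fun a ha => ball_disjoint_ball ?_
      linarith [hAsep hc ha.1 (Ne.symm ha.2)]
    · intro z hz
      obtain ⟨a, ha, hza⟩ := (infDist_lt_iff hA).1 (hsA z hz)
      rcases eq_or_ne a c with rfl | hac
      · exact Or.inl hza
      · exact Or.inr (mem_biUnion ⟨ha, hac⟩ hza)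
  refine ⟨c, hc, hsc, fun z hz => (le_infDist hA).2 fun a ha => ?_⟩
  rcases eq_or_ne a c with rfl | hac
  · rfl
  · linarith [hAsep ha hc hac, dist_triangle_left a c z, mem_ball.1 (hsc hz)]

lemma mul_log_half_le {a b : ℝ} (hab : 0 ≤ a + b) :
    (a + b) * log ((a + b) / 2) ≤ a * log a + b * log b := by
  wlog hba : b ≤ a generalizing a b
  · have := this (a := b) (b := a) (by linarith) (le_of_not_ge hba)
    rwa [add_comm b a, add_comm (b * _)] at this
  rcases le_or_gt 0 b with hb | hb
  · have := convexOn_mul_log.2 (mem_Ici.2 (hb.trans hba)) (mem_Ici.2 hb)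
      (by norm_num : (0 : ℝ) ≤ 1 / 2) (by norm_num : (0 : ℝ) ≤ 1 / 2) (by norm_num)
    simp only [smul_eq_mul] at this
    rw [show 1 / 2 * a + 1 / 2 * b = (a + b) / 2 by ring] at this
    linarith
  · -- `a log a + b log b = (a + b) log a + (-b) (log a - log (-b))`, as `log b = log (-b)`
    have hlog : log (-b) ≤ log a := log_le_log (by linarith) (by linarith)
    have hhalf : (a + b) * log ((a + b) / 2) ≤ (a + b) * log a := by
      rcases hab.eq_or_lt with h | h
      · simp [← h]
      · exact mul_le_mul_of_nonneg_left (log_le_log (by linarith) (by linarith)) hab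
    rw [← log_neg_eq_log b]
    nlinarith [mul_nonneg (neg_nonneg.2 hb.le) (sub_nonneg.2 hlog)]

lemma integral_log_ge {u v : ℝ} (huv : u ≤ v) :
    (v - u) * (log ((v - u) / 2) - 1) ≤ ∫ t in u..v, log t := by
  have := mul_log_half_le (a := v) (b := -u) (by linarith)
  rw [log_neg_eq_log, ← sub_eq_add_neg] at this
  rw [integral_log]
  linarith

lemma IsPreconnected.ae_eq_Icc {μ : Measure ℝ} [NullSingletonClass μ] {s : Set ℝ}
    (hs : IsPreconnected s) (hsb : Bornology.IsBounded s) : s =ᵐ[μ] Icc (sInf s) (sSup s) := by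
  rcases s.eq_empty_or_nonempty with rfl | hne
  · simpa using (ae_eq_empty.2 (measure_singleton (μ := μ) 0)).symm
  exact (subset_Icc_csInf_csSup hsb.bddBelow hsb.bddAbove).eventuallyLE.antisymm <|
    Ioo_ae_eq_Icc.symm.le.trans
      (IsConnected.Ioo_csInf_csSup_subset ⟨hne, hs⟩ hsb.bddBelow hsb.bddAbove).eventuallyLE

lemma setIntegral_log_abs_ge {g : ℝ → ℝ} {s : Set ℝ} {K c : ℝ} (hg : Continuous g) (hK : 0 < K)
    (hs : IsPreconnected s) (hsb : Bornology.IsBounded s)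
    (hgs : ∀ t ∈ s, K * |t - c| ≤ |g t|) :
    sLen s * (log K + log (sLen s / 2) - 1) ≤ ∫ t in s, log |g t| := by
  rcases s.eq_empty_or_nonempty with rfl | hne
  · simp [sLen]
  set u := sInf s
  set v := sSup s
  have hae : s =ᵐ[volume] Icc u v := hs.ae_eq_Icc hsb
  have hsub : s ⊆ Icc u v := subset_Icc_csInf_csSup hsb.bddBelow hsb.bddAbove
  have huv : u ≤ v := csInf_le_csSup hne hsb.bddBelow hsb.bddAbove
  have hmeas : MeasurableSet s := hs.ordConnected.measurableSet
  have hlen : sLen s = v - u := by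
    rw [sLen, measure_congr hae, Real.volume_Icc, ENNReal.toReal_ofReal (sub_nonneg.2 huv)]
  set φ : ℝ → ℝ := fun t => log K + log (t - c)
  have hlogc : IntervalIntegrable (fun t => log (t - c)) volume u v :=
    by simpa using
      (intervalIntegral.intervalIntegrable_log' (a := u - c) (b := v - c)).comp_sub_right c
  have hφs : IntegrableOn φ s :=
    ((intervalIntegrable_iff_integrableOn_Icc_of_le huv).1
      (intervalIntegrable_const.add hlogc)).mono_set hsub
  have hφle : ∀ᵐ t, t ∈ s → φ t ≤ log |g t| := by
    filter_upwards [(countable_singleton c).ae_notMem volume] with t htc hts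
    simp only [φ]
    rw [← log_abs (t - c), ← log_mul hK.ne' (abs_pos.2 (sub_ne_zero.2 htc)).ne']
    exact log_le_log (mul_pos hK (abs_pos.2 (sub_ne_zero.2 htc))) (hgs t hts)
  have hint : IntegrableOn (fun t => log |g t|) s :=
    integrable_of_le_of_le hg.abs.measurable.log.aestronglyMeasurable
      ((ae_restrict_iff' hmeas).2 hφle)
      (Eventually.of_forall fun t => log_le_self (abs_nonneg (g t))) hφs
      (hg.abs.integrableOn_Icc.mono_set hsub)
  calc sLen s * (log K + log (sLen s / 2) - 1)
      ≤ (v - u) * log K + ∫ t in u..v, log (t - c) := by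
        have := integral_log_ge (u := u - c) (v := v - c) (by linarith)
        rw [sub_sub_sub_cancel_right] at this
        rw [hlen, intervalIntegral.integral_comp_sub_right (fun t => log t)]
        linarith
    _ = ∫ t in s, φ t := by
        rw [setIntegral_congr_set hae, integral_Icc_eq_integral_Ioc,
          ← intervalIntegral.integral_of_le huv,
          intervalIntegral.integral_add intervalIntegrable_const hlogc,
          intervalIntegral.integral_const, smul_eq_mul]
    _ ≤ ∫ t in s, log |g t| := setIntegral_mono_on_ae hφs hint hmeas hφle

lemma mul_log_rpow_mul_le {L K h β : ℝ} (hL : 0 < L) (hK : 0 < K) (hh : 0 ≤ h)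
    (hLK : 1 + log 2 ≤ β * log L + log K) :
    h * log (L ^ (1 - β) * h) ≤ h * (log (L * K) + log (h / 2) - 1) := by
  rcases hh.eq_or_lt with rfl | hh
  · simp
  rw [log_mul (rpow_pos_of_pos hL _).ne' hh.ne', log_rpow hL, log_mul hL.ne' hK.ne',
    log_div hh.ne' two_ne_zero]
  exact mul_le_mul_of_nonneg_left (by linarith) hh.le

lemma add_int_mem_crit {ψ : ℝ → ℝ} (hψ : Function.Periodic ψ 1) :
    ∀ a ∈ Crit ψ, ∀ n : ℤ, a + n ∈ Crit ψ := fun a ha n => by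
  simpa [Crit] using (hψ.deriv.int_mul n a).trans ha

lemma crit_nonempty {ψ : ℝ → ℝ} (hψ : Function.Periodic ψ 1) (hcont : Continuous ψ) :
    (Crit ψ).Nonempty := by
  obtain ⟨c, -, hc⟩ := exists_deriv_eq_zero zero_lt_one hcont.continuousOn
    (by simpa using (hψ 0).symm)
  exact ⟨c, hc⟩

lemma exists_abs_deriv_ge_of_subset_Bset {ψ : ℝ → ℝ} {K₁ L η : ℝ} {I : Set ℝ}
    (hψ : Function.Periodic ψ 1) (hcont : Continuous ψ) (hK1 : K1hyp ψ K₁) (hL : 0 < L)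
    (hsep : (Crit ψ).Pairwise fun a b => 4 * (K₁⁻¹ * L ^ η) < dist a b)
    (hI : IsConnected I) (hIB : I ⊆ Bset ψ K₁ L η) :
    ∃ c, Bornology.IsBounded I ∧ ∀ z ∈ I, K₁ * |z - c| ≤ |deriv ψ z| := by
  have hcrit := add_int_mem_crit hψ
  have hne := crit_nonempty hψ hcont
  have hIr : ∀ z ∈ I, infDist z (Crit ψ) < 2 * (K₁⁻¹ * L ^ η) := fun z hz => by
    have : dS1Set z (Crit ψ) ≤ K₁⁻¹ * L ^ η := hIB hz
    rw [dS1Set_eq_infDist hcrit hne] at this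
    linarith [show 0 < K₁⁻¹ * L ^ η by have := hK1.1; positivity]
  obtain ⟨c, -, hIc, hc⟩ := hI.isPreconnected.exists_subset_ball_dist_le_infDist hI.nonempty hne
    (hsep.mono' fun _ _ h => by linarith) hIr
  refine ⟨c, isBounded_ball.subset hIc, fun z hz => ?_⟩
  calc K₁ * |z - c| ≤ K₁ * dS1Set z (Crit ψ) := by
        rw [dS1Set_eq_infDist hcrit hne, ← Real.dist_eq]
        exact mul_le_mul_of_nonneg_left (hc z hz) hK1.1.le
    _ ≤ |deriv ψ z| := hK1.2 z

theorem lemma_integral_general (ψ : ℝ → ℝ) (hψ : PsiReg ψ)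
    (K₁ : ℝ) (hK1 : K1hyp ψ K₁) (β : ℝ) (hβ : β ∈ Ioo (0:ℝ) (1 / 100)) :
    ∃ L₀ : ℝ, 0 < L₀ ∧ ∀ L : ℝ, L₀ ≤ L →
      ∀ I : Set ℝ, IsConnected I → I ⊆ Bset ψ K₁ L (-(1:ℝ) / 2 - β) →
        sLen I * Real.log (L ^ ((1:ℝ) - β) * sLen I) ≤
          ∫ z in I, Real.log |L * deriv ψ z| := by
  obtain ⟨hper, hC2, hH1, -⟩ := hψ
  have hr : Tendsto (fun L => 4 * (K₁⁻¹ * L ^ (-(1:ℝ) / 2 - β))) atTop (𝓝 0) := by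
    rw [show -(1:ℝ) / 2 - β = -(1 / 2 + β) by ring]
    simpa [mul_assoc] using
      (tendsto_rpow_neg_atTop (by linarith [hβ.1] : 0 < 1 / 2 + β)).const_mul (4 * K₁⁻¹)
  have hlog : ∀ᶠ L in atTop, 1 + log 2 ≤ β * log L + log K₁ :=
    ((tendsto_log_atTop.const_mul_atTop hβ.1).eventually_ge_atTop (1 + log 2 - log K₁)).mono
      fun _ h => by linarith
  obtain ⟨L₀, hL₀⟩ := eventually_atTop.1 ((eventually_gt_atTop 0).and
    ((hr.eventually
      (eventually_pairwise_lt_dist_of_add_int_mem (add_int_mem_crit hper) hH1)).and hlog))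
  refine ⟨max L₀ 1, by positivity, fun L hL I hI hIB => ?_⟩
  obtain ⟨hL, hsep, hLK⟩ := hL₀ L (le_of_max_le_left hL)
  obtain ⟨c, hIb, hIc⟩ :=
    exists_abs_deriv_ge_of_subset_Bset hper hC2.continuous hK1 hL hsep hI hIB
  calc sLen I * log (L ^ ((1:ℝ) - β) * sLen I)
      ≤ sLen I * (log (L * K₁) + log (sLen I / 2) - 1) :=
        mul_log_rpow_mul_le hL hK1.1 ENNReal.toReal_nonneg hLK
    _ ≤ ∫ z in I, log |L * deriv ψ z| := by
        refine setIntegral_log_abs_ge (c := c)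
          (continuous_const.mul (hC2.continuous_deriv one_le_two)) (mul_pos hL hK1.1)
          hI.isPreconnected hIb fun z hz => ?_
        rw [abs_mul, abs_of_pos hL, mul_assoc]
        exact mul_le_mul_of_nonneg_left (hIc z hz) hL.le

/-- **Lemma 6.3** (integral lower bound on `B`).  There is `L₀ = L₀(β,ψ)` such that for all
`L ≥ L₀` and every connected interval `I ⊆ B = B(-1/2-β)`:
`∫_I log|f'(z)| dz ≥ |I| log(L^{1-β}|I|)`. -/
theorem lemma_integral (ψ : ℝ → ℝ) (hψ : PsiReg ψ) (hH4 : H4 ψ)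
    (K₁ : ℝ) (hK1 : K1hyp ψ K₁) (β : ℝ) (hβ : β ∈ Ioo (0:ℝ) (1 / 100)) :
    ∃ L₀ : ℝ, 0 < L₀ ∧ ∀ L : ℝ, L₀ ≤ L →
      ∀ I : Set ℝ, IsConnected I → I ⊆ Bset ψ K₁ L (-(1:ℝ) / 2 - β) →
        sLen I * Real.log (L ^ ((1:ℝ) - β) * sLen I) ≤
          ∫ z in I, Real.log |L * deriv ψ z| :=
  lemma_integral_general ψ hψ K₁ hK1 β hβ
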